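/- arXiv:1901.03350 — 4 statements merged into one kernel-verified Lean document; each statement's English description precedes it below -/
import Mathlib

section
/- Let w(ξ) = -ξ^5. If ξ1 + ξ2 + ξ3 = ξ4 and τ1 + τ2 + τ3 = τ4, then max_{i=1,2,3,4} |τ_i - w(ξ_i)| ≥ (5/8)·|(ξ1+ξ2)(ξ2+ξ3)(ξ3+ξ1)|·(ξ1² + ξ2² + ξ3² + ξ4²). -/
theorem cubic_modulation_bound (ξ1 ξ2 ξ3 ξ4 τ1 τ2 τ3 τ4 : ℝ)
    (hξ : ξ1 + ξ2 + ξ3 = ξ4) (hτ : τ1 + τ2 + τ3 = τ4) :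
    max (|τ1 - (-ξ1^5)|) (max (|τ2 - (-ξ2^5)|) (max (|τ3 - (-ξ3^5)|) (|τ4 - (-ξ4^5)|)))
      ≥ (5/8) * |(ξ1+ξ2) * (ξ2+ξ3) * (ξ3+ξ1)| * (ξ1^2 + ξ2^2 + ξ3^2 + ξ4^2) := by
  set a1 := τ1 - (-ξ1^5)
  set a2 := τ2 - (-ξ2^5)
  set a3 := τ3 - (-ξ3^5)
  set a4 := τ4 - (-ξ4^5)
  set M := max (|a1|) (max (|a2|) (max (|a3|) (|a4|))) with hM
  have hG : a4 - (a1 + a2 + a3) =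
      (5/2) * ((ξ1+ξ2) * (ξ2+ξ3) * (ξ3+ξ1)) * (ξ1^2 + ξ2^2 + ξ3^2 + ξ4^2) := by
    simp only [a1, a2, a3, a4]
    subst hξ hτ
    ring
  have h1 : |a1| ≤ M := le_max_left _ _
  have h2 : |a2| ≤ M := le_trans (le_max_left _ _) (le_max_right _ _)
  have h3 : |a3| ≤ M := le_trans (le_trans (le_max_left _ _) (le_max_right _ _)) (le_max_right _ _)
  have h4 : |a4| ≤ M := le_trans (le_trans (le_max_right _ _) (le_max_right _ _)) (le_max_right _ _)
  have hsum : |a4 - (a1 + a2 + a3)| ≤ 4 * M := by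
    calc |a4 - (a1 + a2 + a3)| ≤ |a4| + |a1 + a2 + a3| := abs_sub _ _
      _ = |a1 + a2 + a3| + |a4| := by ring
      _ ≤ (|a1 + a2| + |a3|) + |a4| := by gcongr; exact abs_add_le _ _
      _ ≤ ((|a1| + |a2|) + |a3|) + |a4| := by gcongr; exact abs_add_le _ _
      _ ≤ 4 * M := by linarith
  rw [hG] at hsum
  rw [abs_mul, abs_mul] at hsum
  have hx : |ξ1^2 + ξ2^2 + ξ3^2 + ξ4^2| = ξ1^2 + ξ2^2 + ξ3^2 + ξ4^2 := by
    apply abs_of_nonneg; positivity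
  rw [hx] at hsum
  have h52 : |(5:ℝ)/2| = 5/2 := by norm_num
  rw [h52] at hsum
  linarith
end

section
/- Let μ ∈ ℝ, c > 0, and define Q(z) = c / (2μ + √(4μ² + c)·cosh(√c·z)). If 2μ + √(4μ²+c) > 0 (in particular if μ ≥ 0), then Q is smooth, everywhere positive, and satisfies the second-order ODE Q''(z) − c·Q(z) + 6μ·Q(z)² + 2·Q(z)³ = 0 for all z ∈ ℝ. -/
noncomputable def gardnerSoliton (μ c : ℝ) : ℝ → ℝ :=
  fun z => c / (2*μ + Real.sqrt (4*μ^2 + c) * Real.cosh (Real.sqrt c * z))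

theorem soliton_ODE (μ c : ℝ) (hc : 0 < c)
    (hpos : 0 < 2*μ + Real.sqrt (4*μ^2 + c)) :
    ContDiff ℝ (⊤ : ℕ∞) (gardnerSoliton μ c) ∧
    ∀ z : ℝ, 0 < gardnerSoliton μ c z ∧
      deriv (deriv (gardnerSoliton μ c)) z - c * gardnerSoliton μ c z
        + 6 * μ * (gardnerSoliton μ c z)^2 + 2 * (gardnerSoliton μ c z)^3 = 0 := by
  set b := Real.sqrt (4*μ^2 + c) with hbdef
  set s := Real.sqrt c with hsdef
  have hb2 : b^2 = 4*μ^2 + c := Real.sq_sqrt (by positivity)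
  have hs2 : s^2 = c := Real.sq_sqrt hc.le
  have hbnn : 0 ≤ b := Real.sqrt_nonneg _
  have hQeq : gardnerSoliton μ c = fun z => c / (2*μ + b * Real.cosh (s*z)) := rfl
  have hD : ∀ z : ℝ, 0 < 2*μ + b * Real.cosh (s*z) := by
    intro z
    nlinarith [Real.one_le_cosh (s*z)]
  have hDne : ∀ z : ℝ, 2*μ + b * Real.cosh (s*z) ≠ 0 := fun z => (hD z).ne'
  have hDd : ∀ z : ℝ, HasDerivAt (fun z => 2*μ + b * Real.cosh (s*z))
      (b * (s * Real.sinh (s*z))) z := by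
    intro z
    have h1 : HasDerivAt (fun z : ℝ => s*z) s z := by
      simpa using (hasDerivAt_id z).const_mul s
    have h2 := (Real.hasDerivAt_cosh (s*z)).comp z h1
    have h3 := (h2.const_mul b).const_add (2*μ)
    refine h3.congr_deriv ?_
    ring
  have hQ' : ∀ z : ℝ, HasDerivAt (gardnerSoliton μ c)
      (-(c * (b * (s * Real.sinh (s*z)))) / ((2*μ + b * Real.cosh (s*z))^2)) z := by
    intro z
    rw [hQeq]
    have := (hasDerivAt_const z c).div (hDd z) (hDne z)
    refine this.congr_deriv ?_
    ring
  have hderiv1 : deriv (gardnerSoliton μ c)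
      = fun z => -(c * (b * (s * Real.sinh (s*z)))) / ((2*μ + b * Real.cosh (s*z))^2) := by
    funext z; exact (hQ' z).deriv
  have hsinhd : ∀ z : ℝ, HasDerivAt (fun z => -(c * (b * (s * Real.sinh (s*z)))))
      (-(c * (b * (s * (s * Real.cosh (s*z)))))) z := by
    intro z
    have h1 : HasDerivAt (fun z : ℝ => s*z) s z := by
      simpa using (hasDerivAt_id z).const_mul s
    have h2 := (Real.hasDerivAt_sinh (s*z)).comp z h1
    have h3 := (h2.const_mul (c*b*s)).neg
    refine (h3.congr_deriv ?_).congr_of_eventuallyEq (Filter.Eventually.of_forall fun w => ?_)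
    · ring
    · simp only [Function.comp_apply, Pi.neg_apply]; ring
  have hQ'' : ∀ z : ℝ, HasDerivAt (deriv (gardnerSoliton μ c))
      ((-(c * (b * (s * (s * Real.cosh (s*z))))) * ((2*μ + b * Real.cosh (s*z))^2)
        - (-(c * (b * (s * Real.sinh (s*z))))) *
          ((2:ℕ) * (2*μ + b * Real.cosh (s*z))^1 * (b * (s * Real.sinh (s*z)))))
        / (((2*μ + b * Real.cosh (s*z))^2)^2)) z := by
    intro z
    rw [hderiv1]
    exact (hsinhd z).div ((hDd z).pow 2) (pow_ne_zero 2 (hDne z))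
  constructor
  · rw [hQeq]
    exact ContDiff.div contDiff_const
      (contDiff_const.add (contDiff_const.mul
        (Real.contDiff_cosh.comp (contDiff_const.mul contDiff_id)))) hDne
  · intro z
    have hQz : gardnerSoliton μ c z = c / (2*μ + b * Real.cosh (s*z)) := rfl
    refine ⟨by rw [hQz]; exact div_pos hc (hD z), ?_⟩
    rw [(hQ'' z).deriv, hQz]
    have hch : Real.cosh (s*z)^2 - Real.sinh (s*z)^2 = 1 := Real.cosh_sq_sub_sinh_sq _
    set ch := Real.cosh (s*z)
    set sh := Real.sinh (s*z)
    have hd := hDne z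
    field_simp
    refine div_eq_zero_iff.mpr (Or.inl ?_)
    linear_combination (c*b*(-(ch*(2*μ+b*ch)) + 2*b*sh^2)) * hs2
      + (-2*c^2*b^2) * hch + (-2*c^2) * hb2
end

section
/- Let μ ≥ 0, c > 0, Q(z) = c/(2μ + √(4μ²+c) cosh(√c z)), and v = c² + 10μ²c. Then the traveling wave u(t,x) = Q(x − v·t) satisfies Q'''' − v·Q + 10(μ+Q)²Q'' + 10(μ+Q)(Q')² + 60μ³Q² + 60μ²Q³ + 30μQ⁴ + 6Q⁵ = 0 pointwise on ℝ. -/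
open Polynomial Real

section AutonomousSecondOrder

variable {f f' : ℝ → ℝ} {p : ℝ[X]}

theorem iteratedDeriv_two_eq_eval_of_hasDerivAt (hf : ∀ x, HasDerivAt f (f' x) x)
    (hf' : ∀ x, HasDerivAt f' (p.eval (f x)) x) :
    iteratedDeriv 2 f = fun x => p.eval (f x) := by
  have hderiv : deriv f = f' := funext fun x => (hf x).deriv
  rw [iteratedDeriv_succ, iteratedDeriv_one, hderiv]
  exact funext fun x => (hf' x).deriv

theorem iteratedDeriv_four_eq_eval_of_hasDerivAt (hf : ∀ x, HasDerivAt f (f' x) x)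
    (hf' : ∀ x, HasDerivAt f' (p.eval (f x)) x) (x : ℝ) :
    iteratedDeriv 4 f x = (derivative (derivative p)).eval (f x) * f' x ^ 2
      + (derivative p).eval (f x) * p.eval (f x) := by
  have hthird : ∀ y, HasDerivAt (fun y => p.eval (f y)) ((derivative p).eval (f y) * f' y) y :=
    fun y => (p.hasDerivAt (f y)).comp y (hf y)
  have hfourth : HasDerivAt (fun y => (derivative p).eval (f y) * f' y)
      ((derivative (derivative p)).eval (f x) * f' x * f' x
        + (derivative p).eval (f x) * p.eval (f x)) x :=
    (((derivative p).hasDerivAt (f x)).comp x (hf x)).mul (hf' x)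
  rw [iteratedDeriv_succ, iteratedDeriv_succ, iteratedDeriv_two_eq_eval_of_hasDerivAt hf hf',
    funext fun y => (hthird y).deriv, hfourth.deriv]
  ring

end AutonomousSecondOrder

section Reciprocal

variable {D D' : ℝ → ℝ} {μ c : ℝ}

theorem hasDerivAt_div_deriv_of_linear_ode {x : ℝ} (hD : HasDerivAt D (D' x) x)
    (hD' : HasDerivAt D' (c * (D x - 2 * μ)) x)
    (hsq : D' x ^ 2 = c * (D x ^ 2 - 4 * μ * D x - c)) (hne : D x ≠ 0) :
    HasDerivAt (fun x => -c * D' x / D x ^ 2)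
      (c * (c / D x) - 6 * μ * (c / D x) ^ 2 - 2 * (c / D x) ^ 3) x := by
  have hden : HasDerivAt (fun x => D x ^ 2) (2 * D x * D' x) x :=
    (hD.fun_pow 2).congr_deriv (by norm_num)
  refine ((hD'.const_mul (-c)).div hden (pow_ne_zero 2 hne)).congr_deriv ?_
  rw [show -c * D' x * (2 * D x * D' x) = -2 * c * D x * D' x ^ 2 by ring, hsq]
  field_simp
  ring

theorem div_deriv_sq_of_first_integral {d d' : ℝ} (hsq : d' ^ 2 = c * (d ^ 2 - 4 * μ * d - c))
    (hne : d ≠ 0) :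
    (-c * d' / d ^ 2) ^ 2 = c * (c / d) ^ 2 - 4 * μ * (c / d) ^ 3 - (c / d) ^ 4 := by
  rw [div_pow, neg_mul, neg_sq, mul_pow, hsq]
  field_simp

end Reciprocal

section Soliton

variable {μ c : ℝ}

noncomputable def gardnerDenom (μ c z : ℝ) : ℝ := 2 * μ + √(4 * μ ^ 2 + c) * cosh (√c * z)

noncomputable def gardnerDenomDeriv (μ c z : ℝ) : ℝ := √(4 * μ ^ 2 + c) * √c * sinh (√c * z)

theorem hasDerivAt_gardnerDenom (z : ℝ) :
    HasDerivAt (gardnerDenom μ c) (gardnerDenomDeriv μ c z) z :=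
  ((((hasDerivAt_const_mul (x := z) (√c)).cosh).const_mul (√(4 * μ ^ 2 + c))).const_add
    (2 * μ)).congr_deriv (by rw [gardnerDenomDeriv]; ring)

theorem hasDerivAt_gardnerDenomDeriv (hc : 0 ≤ c) (z : ℝ) :
    HasDerivAt (gardnerDenomDeriv μ c) (c * (gardnerDenom μ c z - 2 * μ)) z :=
  (((hasDerivAt_const_mul (x := z) (√c)).sinh).const_mul (√(4 * μ ^ 2 + c) * √c)).congr_deriv <| by
    rw [gardnerDenom]
    linear_combination (√(4 * μ ^ 2 + c) * cosh (√c * z)) * sq_sqrt hc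

theorem gardnerDenomDeriv_sq (hc : 0 ≤ c) (z : ℝ) :
    gardnerDenomDeriv μ c z ^ 2
      = c * (gardnerDenom μ c z ^ 2 - 4 * μ * gardnerDenom μ c z - c) := by
  have hA : √(4 * μ ^ 2 + c) ^ 2 = 4 * μ ^ 2 + c := sq_sqrt (by positivity)
  simp only [gardnerDenomDeriv, gardnerDenom]
  linear_combination (√(4 * μ ^ 2 + c) ^ 2 * sinh (√c * z) ^ 2) * sq_sqrt hc
    + c * √(4 * μ ^ 2 + c) ^ 2 * sinh_sq (√c * z) - c * hA

theorem gardnerDenom_pos (hc : 0 < c) (z : ℝ) : 0 < gardnerDenom μ c z := by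
  have hsqrt : -(2 * μ) < √(4 * μ ^ 2 + c) := lt_sqrt_of_sq_lt (by linarith [neg_sq (2 * μ)])
  have hcosh := mul_le_mul_of_nonneg_left (one_le_cosh (√c * z)) (sqrt_nonneg (4 * μ ^ 2 + c))
  rw [gardnerDenom]
  linarith

theorem hasDerivAt_gardnerSoliton (hc : 0 < c) (z : ℝ) :
    HasDerivAt (gardnerSoliton μ c)
      (-c * gardnerDenomDeriv μ c z / gardnerDenom μ c z ^ 2) z :=
  ((hasDerivAt_gardnerDenom z).inv (gardnerDenom_pos hc z).ne').const_mul c |>.congr_deriv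
    (by ring)

theorem hasDerivAt_gardnerSoliton_deriv (hc : 0 < c) (z : ℝ) :
    HasDerivAt (fun z => -c * gardnerDenomDeriv μ c z / gardnerDenom μ c z ^ 2)
      ((C c * X - C (6 * μ) * X ^ 2 - C 2 * X ^ 3).eval (gardnerSoliton μ c z)) z :=
  (hasDerivAt_div_deriv_of_linear_ode (hasDerivAt_gardnerDenom z)
    (hasDerivAt_gardnerDenomDeriv hc.le z) (gardnerDenomDeriv_sq hc.le z)
    (gardnerDenom_pos hc z).ne').congr_deriv <| by
      simp only [eval_sub, eval_mul, eval_C, eval_X, eval_pow]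
      rfl

theorem gardnerSoliton_deriv_sq (hc : 0 < c) (z : ℝ) :
    (-c * gardnerDenomDeriv μ c z / gardnerDenom μ c z ^ 2) ^ 2
      = c * gardnerSoliton μ c z ^ 2 - 4 * μ * gardnerSoliton μ c z ^ 3
        - gardnerSoliton μ c z ^ 4 :=
  div_deriv_sq_of_first_integral (gardnerDenomDeriv_sq hc.le z) (gardnerDenom_pos hc z).ne'

end Soliton

theorem soliton_fourth_order_ODE_general (μ c : ℝ) (hc : 0 < c) :
    ∀ z : ℝ,
      iteratedDeriv 4 (gardnerSoliton μ c) z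
        - (c^2 + 10*μ^2*c) * gardnerSoliton μ c z
        + 10 * (μ + gardnerSoliton μ c z)^2 * iteratedDeriv 2 (gardnerSoliton μ c) z
        + 10 * (μ + gardnerSoliton μ c z) * (deriv (gardnerSoliton μ c) z)^2
        + 60 * μ^3 * (gardnerSoliton μ c z)^2
        + 60 * μ^2 * (gardnerSoliton μ c z)^3
        + 30 * μ * (gardnerSoliton μ c z)^4
        + 6 * (gardnerSoliton μ c z)^5 = 0 := by
  intro z
  have hQ := hasDerivAt_gardnerSoliton (μ := μ) hc
  have hQ' := hasDerivAt_gardnerSoliton_deriv (μ := μ) hc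
  rw [iteratedDeriv_four_eq_eval_of_hasDerivAt hQ hQ',
    iteratedDeriv_two_eq_eval_of_hasDerivAt hQ hQ', (hQ z).deriv]
  simp only [derivative_sub, derivative_C_mul, derivative_X, derivative_X_pow, eval_sub, eval_mul,
    eval_C, eval_X, eval_pow, derivative_one, eval_zero, eval_one]
  linear_combination (-2 * μ - 2 * gardnerSoliton μ c z) * gardnerSoliton_deriv_sq hc z

theorem soliton_fourth_order_ODE (μ c : ℝ) (hμ : 0 ≤ μ) (hc : 0 < c) :
    ∀ z : ℝ,
      iteratedDeriv 4 (gardnerSoliton μ c) z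
        - (c^2 + 10*μ^2*c) * gardnerSoliton μ c z
        + 10 * (μ + gardnerSoliton μ c z)^2 * iteratedDeriv 2 (gardnerSoliton μ c) z
        + 10 * (μ + gardnerSoliton μ c z) * (deriv (gardnerSoliton μ c) z)^2
        + 60 * μ^3 * (gardnerSoliton μ c z)^2
        + 60 * μ^2 * (gardnerSoliton μ c z)^3
        + 30 * μ * (gardnerSoliton μ c z)^4
        + 6 * (gardnerSoliton μ c z)^5 = 0 :=
  soliton_fourth_order_ODE_general μ c hc
end

section
/- Let φ ∈ C_c^∞(ℝ), γ ∈ ℝ, δ > 0, and for N ≥ 1 define h_N(x) = φ(x/N^{4+δ})·sin(Nx + γ). Then N^{−(4+δ)/2}·‖h_N‖_{L²(ℝ)} → ‖φ‖_{L²(ℝ)}/√2 as N → ∞. -/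
open MeasureTheory Filter

private lemma RL_exp (f : ℝ → ℝ) (hf : Integrable f) :
    Tendsto (fun ω : ℝ => ∫ x : ℝ, (f x : ℂ) * Complex.exp ((ω * x : ℝ) * Complex.I))
      atTop (nhds 0) := by
  have h1 := Real.tendsto_integral_exp_smul_cocompact (fun x : ℝ => (f x : ℂ))
  have h2 : Tendsto (fun ω : ℝ => -ω / (2 * Real.pi)) atTop (cocompact ℝ) := by
    have : Tendsto (fun ω : ℝ => -ω / (2 * Real.pi)) atTop atBot := by
      apply Tendsto.atBot_div_const (by positivity)
      exact tendsto_neg_atTop_atBot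
    rw [cocompact_eq_atBot_atTop]
    exact this.mono_right le_sup_left
  have h3 := h1.comp h2
  refine h3.congr fun ω => ?_
  refine integral_congr_ae (Filter.Eventually.of_forall fun x => ?_)
  simp only [Function.comp, Circle.smul_def, Real.fourierChar_apply]
  have harg : 2 * Real.pi * (-(x * (-ω / (2 * Real.pi)))) = ω * x := by
    field_simp
  rw [harg]
  simp [smul_eq_mul, mul_comm]

private lemma RL_cos (f : ℝ → ℝ) (hf : Integrable f) (θ : ℝ) :
    Tendsto (fun ω : ℝ => ∫ x : ℝ, f x * Real.cos (ω * x + θ)) atTop (nhds 0) := by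
  have hint : ∀ ω : ℝ, Integrable fun x : ℝ =>
      (f x : ℂ) * Complex.exp ((ω * x : ℝ) * Complex.I) := by
    intro ω
    have hcont : Continuous fun x : ℝ => Complex.exp ((ω * x : ℝ) * Complex.I) := by
      apply Complex.continuous_exp.comp
      exact (Complex.continuous_ofReal.comp (continuous_const.mul continuous_id)).mul
        continuous_const
    have := (hf.ofReal (𝕜 := ℂ)).bdd_mul (c := 1) hcont.aestronglyMeasurable
      (Filter.Eventually.of_forall fun x => by simp [Complex.norm_exp])
    exact this.congr (Filter.Eventually.of_forall fun x => mul_comm _ _)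
  have hC : Tendsto (fun ω : ℝ =>
      Complex.exp ((θ : ℝ) * Complex.I) * ∫ x : ℝ, (f x : ℂ) *
        Complex.exp ((ω * x : ℝ) * Complex.I)) atTop (nhds 0) := by
    have := (RL_exp f hf).const_mul (Complex.exp ((θ : ℝ) * Complex.I))
    simpa using this
  have hre := (Complex.continuous_re.tendsto 0).comp hC
  simp only [Complex.zero_re] at hre
  refine (hre.congr fun ω => ?_)
  simp only [Function.comp_apply]
  rw [← integral_const_mul, ← RCLike.re_to_complex, ← integral_re (((hint ω)).const_mul _)]
  refine integral_congr_ae (Filter.Eventually.of_forall fun x => ?_)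
  have : Complex.exp ((θ : ℝ) * Complex.I) * ((f x : ℂ) *
      Complex.exp ((ω * x : ℝ) * Complex.I)) =
      (f x : ℂ) * Complex.exp (((ω * x + θ : ℝ)) * Complex.I) := by
    rw [show ((ω * x + θ : ℝ) : ℂ) = ((ω * x : ℝ) : ℂ) + ((θ : ℝ) : ℂ) by push_cast; ring,
      add_mul, Complex.exp_add]
    ring
  simp only [RCLike.re_to_complex]
  rw [this, Complex.mul_re, Complex.ofReal_re, Complex.ofReal_im,
    Complex.exp_ofReal_mul_I_re, zero_mul, sub_zero]

private lemma integrable_mul_cos (f : ℝ → ℝ) (hf : Integrable f) (a b : ℝ) :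
    Integrable fun x : ℝ => f x * Real.cos (a * x + b) := by
  have hcont : Continuous fun x : ℝ => Real.cos (a * x + b) := by
    exact Real.continuous_cos.comp ((continuous_const.mul continuous_id).add continuous_const)
  have := hf.bdd_mul (c := 1) hcont.aestronglyMeasurable
    (Filter.Eventually.of_forall fun x => by rw [Real.norm_eq_abs]; exact Real.abs_cos_le_one _)
  exact this.congr (Filter.Eventually.of_forall fun x => mul_comm _ _)

theorem highfreq_L2_limit (φ : ℝ → ℝ) (hφ : ContDiff ℝ (⊤ : ℕ∞) φ) (hsupp : HasCompactSupport φ)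
    (γ δ : ℝ) (hδ : 0 < δ) :
    Tendsto (fun N : ℝ =>
        N ^ (-(4+δ)/2) *
          Real.sqrt (∫ x : ℝ, (φ (x / N ^ (4+δ)) * Real.sin (N*x + γ))^2))
      atTop
      (nhds (Real.sqrt (∫ x : ℝ, (φ x)^2) / Real.sqrt 2)) := by
  set C : ℝ := ∫ x : ℝ, (φ x)^2 with hC
  have hcont2 : Continuous fun x : ℝ => (φ x)^2 := (hφ.continuous).pow 2
  have hsupp2 : HasCompactSupport fun x : ℝ => (φ x)^2 :=
    hsupp.comp_left (g := fun t : ℝ => t ^ 2) (by simp)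
  have hf2 : Integrable fun x : ℝ => (φ x)^2 :=
    hcont2.integrable_of_hasCompactSupport hsupp2
  have hC0 : 0 ≤ C := integral_nonneg fun x => sq_nonneg _
  set G : ℝ → ℝ := fun ω => ∫ x : ℝ, (φ x)^2 * Real.sin (ω * x + γ)^2 with hGdef
  -- G ω = C/2 - (1/2) * ∫ φ² cos((2ω)x + 2γ)
  have hGeq : ∀ ω : ℝ, G ω = C/2 - (1/2) * ∫ x : ℝ, (φ x)^2 * Real.cos ((2*ω) * x + 2*γ) := by
    intro ω
    have hpt : ∀ x : ℝ, (φ x)^2 * Real.sin (ω * x + γ)^2 =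
        (φ x)^2 / 2 - (1/2) * ((φ x)^2 * Real.cos ((2*ω) * x + 2*γ)) := by
      intro x
      have := Real.sin_sq_eq_half_sub (ω * x + γ)
      rw [this]
      ring_nf
    have h1 : Integrable fun x : ℝ => (φ x)^2 / 2 := hf2.div_const 2
    have h2 : Integrable fun x : ℝ => (1/2) * ((φ x)^2 * Real.cos ((2*ω) * x + 2*γ)) :=
      (integrable_mul_cos _ hf2 (2*ω) (2*γ)).const_mul _
    rw [hGdef]
    simp only [hpt]
    rw [integral_sub h1 h2, integral_div, integral_const_mul]
  have hF : Tendsto (fun ω : ℝ => ∫ x : ℝ, (φ x)^2 * Real.cos (ω * x + 2*γ)) atTop (nhds 0) :=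
    RL_cos _ hf2 (2*γ)
  have h2ω : Tendsto (fun ω : ℝ => 2 * ω) atTop atTop :=
    (tendsto_id (α := ℝ)).const_mul_atTop two_pos
  have hG : Tendsto G atTop (nhds (C/2)) := by
    have := (tendsto_const_nhds (x := C/2) (f := atTop (α := ℝ))).sub
      ((hF.comp h2ω).const_mul (1/2))
    simp only [mul_zero, sub_zero] at this
    refine this.congr fun ω => ?_
    rw [hGeq ω]
    rfl
  -- composition with N ↦ N * N^(4+δ)
  have hM : Tendsto (fun N : ℝ => N * N ^ (4+δ)) atTop atTop :=
    Tendsto.atTop_mul_atTop₀ tendsto_id (tendsto_rpow_atTop (by linarith))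
  have hmain : Tendsto (fun N : ℝ => Real.sqrt (G (N * N ^ (4+δ)))) atTop
      (nhds (Real.sqrt C / Real.sqrt 2)) := by
    have := (Real.continuous_sqrt.tendsto (C/2)).comp (hG.comp hM)
    rw [Function.comp_def] at this
    rwa [show Real.sqrt (C/2) = Real.sqrt C / Real.sqrt 2 from Real.sqrt_div hC0 2] at this
  refine hmain.congr' ?_
  filter_upwards [eventually_gt_atTop (0 : ℝ)] with N hN
  set a : ℝ := N ^ (4+δ) with ha
  have ha0 : 0 < a := Real.rpow_pos_of_pos hN _
  -- change of variables
  have hcv : (∫ x : ℝ, (φ (x / a) * Real.sin (N*x + γ))^2) = a * G (N * a) := by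
    have step1 : (∫ x : ℝ, (φ (x / a) * Real.sin (N*x + γ))^2) =
        ∫ x : ℝ, (fun y => (φ y)^2 * Real.sin ((N * a) * y + γ)^2) (x / a) := by
      refine integral_congr_ae (Filter.Eventually.of_forall fun x => ?_)
      simp only
      have harg : (N * a) * (x / a) = N * x := by
        field_simp
      rw [mul_pow, harg]
    rw [step1, MeasureTheory.Measure.integral_comp_div (fun y => (φ y)^2 * Real.sin ((N * a) * y + γ)^2) a,
      abs_of_pos ha0, smul_eq_mul]
  rw [hcv]
  rw [Real.sqrt_mul ha0.le]
  rw [← mul_assoc]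
  have hpow : N ^ (-(4+δ)/2) * Real.sqrt a = 1 := by
    rw [ha, Real.sqrt_eq_rpow, ← Real.rpow_mul hN.le, ← Real.rpow_add hN,
      show (-(4+δ)/2 + (4+δ)*(1/2) : ℝ) = 0 by ring, Real.rpow_zero]
  rw [hpow, one_mul]
end
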